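/- arXiv:1105.5508 — 3 statements merged into one kernel-verified Lean document; each statement's English description precedes it below -/
import Mathlib

section
/- Suppose the homology sphere condition e₀α + Σ_{l=1}^{ν} ω_l α̂_l = −1 holds. Let m be a natural number and suppose m = d·α + Σ_{l=1}^{ν} a_l·α̂_l for an integer d and integers a_l with 0 ≤ a_l < α_l for every l. Then τ(m) = Σ_{l=1}^{ν} ( (1/2)⌊(m−1)/α_l⌋ − s(α̂_l, α_l; m/α_l, 0) + s(α̂_l, α_l) ) + m²/(2α) + m(1 − ν/2) − d/2 + ν/4 + (1/4)·Σ_{l=1}^{ν} ε_{α_l}(m), where the floor ⌊(m−1)/α_l⌋ is taken in ℤ (so it equals −1 when m = 0). -/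
/-- The sawtooth function `((x))`: it is `0` for integers `x`, and `x - ⌊x⌋ - 1/2` otherwise. -/
noncomputable def saw (x : ℝ) : ℝ := if Int.fract x = 0 then 0 else Int.fract x - 1/2

/-- The generalized Dedekind sum `s(a, b; x, y) = Σ_{i=0}^{b-1} (((i+y)/b))·((a(i+y)/b + x))`. -/
noncomputable def dsum (a b : ℤ) (x y : ℝ) : ℝ :=
  ∑ i ∈ Finset.range b.toNat,
    saw (((i : ℝ) + y) / (b : ℝ)) * saw ((a : ℝ) * ((i : ℝ) + y) / (b : ℝ) + x)

/-! Writing `⌈x⌉ = x - ((x)) + 1/2 - [x ∈ ℤ]/2`, the sum `τ(m)` splits into a quadratic polynomial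
in `m`, the counts `#{j < m | α_l ∣ j}` and the sawtooth sums `Σ_{j<m} ((j ω_l / α_l))`.
The homology sphere condition gives `α̂_l ω_l ≡ -1 (mod α_l)`. When `m` grows by one, the summand
`((i/α_l)) (((α̂_l i + m)/α_l))` of `s(α̂_l, α_l; m/α_l, 0)` moves by a drift `((i/α_l))/α_l`, which
sums to zero over `i`, plus jumps at the `i` with `α_l ∣ α̂_l i + m` or `α_l ∣ α̂_l i + m + 1`, that
is at `i ≡ ω_l m` and `i ≡ ω_l (m + 1)`. So these Dedekind sums telescope the sawtooth sums.
Finally `a_l ≡ -ω_l m (mod α_l)` expresses `((ω_l m / α_l))` through `a_l`, and the `a_l` recombine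
with `d` into `m/α`. -/

open Finset

lemma saw_neg (x : ℝ) : saw (-x) = -saw x := by
  unfold saw
  by_cases hx : Int.fract x = 0
  · simp [hx, Int.fract_neg_eq_zero]
  · rw [if_neg (Int.fract_neg_eq_zero.not.mpr hx), if_neg hx, Int.fract_neg hx]
    ring

lemma ceil_eq_sub_saw (x : ℝ) :
    (⌈x⌉ : ℝ) = x - saw x + 1 / 2 - if Int.fract x = 0 then 1 / 2 else 0 := by
  unfold saw
  split_ifs with hx
  · obtain ⟨k, rfl⟩ := Int.fract_eq_zero_iff.mp hx
    simp
  · rw [Int.ceil_eq_add_one_sub_fract hx]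
    ring

lemma sum_range_cast_id (m : ℕ) : ∑ j ∈ range m, (j : ℝ) = m * (m - 1) / 2 := by
  induction m with
  | zero => simp
  | succ m ih => rw [sum_range_succ, ih]; push_cast; ring

namespace Int

variable {b : ℤ}

theorem add_one_ediv (hb : 0 < b) (n : ℤ) : (n + 1) / b = n / b + if b ∣ n + 1 then 1 else 0 := by
  have hdiv := emod_add_mul_ediv n b
  have hr := emod_nonneg n hb.ne'
  have hrb := emod_lt_of_pos n hb
  split_ifs with h
  · obtain ⟨k, hk⟩ := h
    have : n / b = k - 1 :=
      ((Int.ediv_emod_unique (r := b - 1) hb).mpr ⟨by linear_combination -hk, by omega, by omega⟩).1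
    rw [hk, Int.mul_ediv_cancel_left _ hb.ne', this]
    ring
  · have hne : n % b + 1 ≠ b := fun he => h ⟨n / b + 1, by linear_combination he - hdiv⟩
    rw [add_zero]
    exact ((Int.ediv_emod_unique (r := n % b + 1) hb).mpr
      ⟨by linear_combination hdiv, by omega, by omega⟩).1

theorem floor_intCast_div_intCast {K : Type*} [Field K] [LinearOrder K] [IsStrictOrderedRing K]
    [FloorRing K] (hb : 0 < b) (n : ℤ) : ⌊(n : K) / b⌋ = n / b := by
  lift b to ℕ using hb.le
  rw [← Rat.floor_intCast_div_natCast, ← Rat.floor_cast (α := K)]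
  push_cast
  rfl

end Int

noncomputable def sawDiv (n b : ℤ) : ℝ := saw ((n : ℝ) / b)

section SawDiv

variable {b : ℤ}

lemma fract_intCast_div (hb : 0 < b) (n : ℤ) : Int.fract ((n : ℝ) / b) = ((n % b : ℤ) : ℝ) / b := by
  lift b to ℕ using hb.le
  simpa using Int.fract_div_intCast_eq_div_intCast_mod (k := ℝ) (m := n) (n := b)

lemma fract_intCast_div_eq_zero_iff (hb : 0 < b) (n : ℤ) :
    Int.fract ((n : ℝ) / b) = 0 ↔ b ∣ n := by
  rw [fract_intCast_div hb, div_eq_zero_iff, Int.dvd_iff_emod_eq_zero]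
  have : (b : ℝ) ≠ 0 := by exact_mod_cast hb.ne'
  simp [this]

lemma sawDiv_eq_emod (hb : 0 < b) (n : ℤ) :
    sawDiv n b = ((n % b : ℤ) : ℝ) / b - 1 / 2 + if b ∣ n then 1 / 2 else 0 := by
  unfold sawDiv saw
  by_cases h : b ∣ n
  · rw [if_pos ((fract_intCast_div_eq_zero_iff hb n).mpr h), if_pos h, Int.emod_eq_zero_of_dvd h]
    simp
  · rw [if_neg (mt (fract_intCast_div_eq_zero_iff hb n).mp h), if_neg h, fract_intCast_div hb]
    ring

lemma sawDiv_zero (b : ℤ) : sawDiv 0 b = 0 := by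
  simp [sawDiv, saw]

lemma sawDiv_neg (n b : ℤ) : sawDiv (-n) b = -sawDiv n b := by
  simp only [sawDiv, Int.cast_neg, neg_div, saw_neg]

lemma sawDiv_congr (hb : 0 < b) {n n' : ℤ} (h : n ≡ n' [ZMOD b]) : sawDiv n b = sawDiv n' b := by
  simp only [sawDiv_eq_emod hb, Int.dvd_iff_emod_eq_zero, h.eq]

lemma sawDiv_add_one_sub (hb : 0 < b) (n : ℤ) :
    sawDiv (n + 1) b - sawDiv n b =
      1 / b - (if b ∣ n then 1 / 2 else 0) - if b ∣ n + 1 then 1 / 2 else 0 := by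
  have hmod : (((n + 1) % b : ℤ) : ℝ) = (n % b : ℤ) + 1 - b * if b ∣ n + 1 then 1 else 0 := by
    rw [Int.emod_def, Int.emod_def, Int.add_one_ediv hb]
    push_cast
    ring
  have : (b : ℝ) ≠ 0 := by exact_mod_cast hb.ne'
  rw [sawDiv_eq_emod hb, sawDiv_eq_emod hb, hmod]
  split_ifs <;> field_simp <;> ring

lemma sum_range_sawDiv (hb : 0 < b) : ∑ i ∈ range b.toNat, sawDiv i b = 0 := by
  lift b to ℕ using hb.le
  have hterm : ∀ i ∈ range b, sawDiv i b = i / b - 1 / 2 + if i = 0 then 1 / 2 else 0 := by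
    intro i hi
    have hi : (i : ℤ) < b := by simpa using hi
    rcases eq_or_ne i 0 with rfl | hi0
    · simp [sawDiv_zero]
    · have hndvd : ¬(b : ℤ) ∣ i := fun h => by have := Int.le_of_dvd (by omega) h; omega
      rw [sawDiv_eq_emod hb, Int.emod_eq_of_lt (by positivity) hi, if_neg hndvd, if_neg hi0]
      push_cast
      ring
  have hb0 : 0 < b := by exact_mod_cast hb
  rw [Int.toNat_natCast, sum_congr rfl hterm]
  simp only [sum_add_distrib, sum_sub_distrib, ← sum_div, sum_range_cast_id, sum_ite_eq',
    mem_range, hb0, if_true, sum_const, card_range, nsmul_eq_mul]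
  field_simp
  ring

end SawDiv

section Dedekind

variable {b h ω : ℤ}

lemma dvd_mul_add_iff_modEq (hhω : b ∣ h * ω + 1) (i c : ℤ) :
    b ∣ h * i + c ↔ i ≡ ω * c [ZMOD b] := by
  rw [Int.modEq_iff_dvd]
  constructor
  · intro hd
    have := (hd.mul_left ω).sub (hhω.mul_left i)
    rwa [show ω * (h * i + c) - i * (h * ω + 1) = ω * c - i by ring] at this
  · intro hd
    have := (hhω.mul_left c).sub (hd.mul_left h)
    rwa [show c * (h * ω + 1) - h * (ω * c - i) = h * i + c by ring] at this

lemma sum_range_ite_dvd_mul_add (hb : 0 < b) (hhω : b ∣ h * ω + 1) {f : ℤ → ℝ}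
    (hf : ∀ {n n' : ℤ}, n ≡ n' [ZMOD b] → f n = f n') (c : ℤ) :
    ∑ i ∈ range b.toNat, (if b ∣ h * i + c then f i else 0) = f (ω * c) := by
  simp only [dvd_mul_add_iff_modEq hhω]
  have hr := Int.emod_nonneg (ω * c) hb.ne'
  have hrb := Int.emod_lt_of_pos (ω * c) hb
  have hr₀ : (((ω * c) % b).toNat : ℤ) = (ω * c) % b := Int.toNat_of_nonneg hr
  rw [sum_eq_single_of_mem ((ω * c) % b).toNat (by rw [mem_range]; omega)]
  · rw [hr₀, if_pos (Int.mod_modEq _ _), hf (Int.mod_modEq _ _)]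
  · intro i hi hne
    rw [if_neg]
    intro hi₀
    have hi : (i : ℤ) < b := by simpa using hi
    have : (i : ℤ) = (ω * c) % b := by
      rw [← hi₀.eq, Int.emod_eq_of_lt (by positivity) hi]
    omega

lemma dsum_intCast_div (hb : 0 < b) (h c : ℤ) :
    dsum h b ((c : ℝ) / b) 0 = ∑ i ∈ range b.toNat, sawDiv i b * sawDiv (h * i + c) b := by
  have : (b : ℝ) ≠ 0 := by exact_mod_cast hb.ne'
  refine sum_congr rfl fun i _ => ?_
  simp only [sawDiv, add_zero]
  congr 2
  push_cast
  ring

lemma dsum_add_one_sub (hb : 0 < b) (hhω : b ∣ h * ω + 1) (c : ℤ) :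
    dsum h b (((c + 1 : ℤ) : ℝ) / b) 0 - dsum h b ((c : ℝ) / b) 0 =
      -(sawDiv (ω * c) b + sawDiv (ω * (c + 1)) b) / 2 := by
  have hstep : ∀ i : ℕ, sawDiv i b * sawDiv (h * i + (c + 1)) b - sawDiv i b * sawDiv (h * i + c) b
      = sawDiv i b / b - (if b ∣ h * i + c then sawDiv i b else 0) / 2
        - (if b ∣ h * i + (c + 1) then sawDiv i b else 0) / 2 := by
    intro i
    rw [← mul_sub, ← add_assoc, sawDiv_add_one_sub hb]
    split_ifs <;> ring
  rw [dsum_intCast_div hb, dsum_intCast_div hb, ← sum_sub_distrib, sum_congr rfl fun i _ => hstep i]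
  simp only [sum_sub_distrib, ← sum_div, sum_range_sawDiv hb,
    sum_range_ite_dvd_mul_add hb hhω (sawDiv_congr hb)]
  ring

lemma sum_range_sawDiv_mul (hb : 0 < b) (hhω : b ∣ h * ω + 1) (m : ℕ) :
    ∑ j ∈ range m, sawDiv (ω * j) b =
      dsum h b 0 0 - dsum h b ((m : ℝ) / b) 0 - sawDiv (ω * m) b / 2 := by
  induction m with
  | zero => simp [sawDiv_zero]
  | succ m ih =>
    have := dsum_add_one_sub hb hhω m
    push_cast at this ⊢
    rw [sum_range_succ, ih]
    linarith

end Dedekind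

section CeilSum

variable {b h ω : ℤ}

lemma isCoprime_of_dvd_mul_add_one (hhω : b ∣ h * ω + 1) : IsCoprime b ω := by
  obtain ⟨k, hk⟩ := hhω
  exact ⟨k, -h, by linear_combination -hk⟩

lemma IsCoprime.dvd_mul_left_iff (hcop : IsCoprime b ω) (n : ℤ) : b ∣ ω * n ↔ b ∣ n :=
  ⟨hcop.dvd_of_dvd_mul_left, (Dvd.dvd.mul_left · ω)⟩

lemma sum_range_ite_dvd (hb : 0 < b) (m : ℕ) :
    ∑ j ∈ range m, (if b ∣ (j : ℤ) then (1 : ℝ) else 0) = ⌊((m : ℝ) - 1) / b⌋ + 1 := by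
  rw [show (m : ℝ) - 1 = ((m - 1 : ℤ) : ℝ) by push_cast; ring, Int.floor_intCast_div_intCast hb]
  induction m with
  | zero => simp [Int.neg_one_ediv, Int.sign_eq_one_of_pos hb]
  | succ m ih =>
    rw [sum_range_succ, ih, show ((m + 1 : ℕ) : ℤ) - 1 = (m - 1) + 1 by push_cast; ring,
      Int.add_one_ediv hb, sub_add_cancel]
    push_cast
    ring

lemma sum_range_ceil_mul_div (hb : 0 < b) (hhω : b ∣ h * ω + 1) (m : ℕ) :
    ∑ j ∈ range m, ((⌈(j : ℚ) * ω / b⌉ : ℤ) : ℝ) =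
      m * (m - 1) / 2 * (ω / b) + dsum h b ((m : ℝ) / b) 0 - dsum h b 0 0
        + sawDiv (ω * m) b / 2 + m / 2 - (⌊((m : ℝ) - 1) / b⌋ + 1) / 2 := by
  have hceil : ∀ j : ℕ, ((⌈(j : ℚ) * ω / b⌉ : ℤ) : ℝ) =
      j * (ω / b) - sawDiv (ω * j) b + 1 / 2 - (if b ∣ (j : ℤ) then 1 else 0) / 2 := by
    intro j
    have hx : (((j * ω / b : ℚ)) : ℝ) = ((ω * j : ℤ) : ℝ) / b := by push_cast; ring
    rw [← Rat.ceil_cast (α := ℝ), hx, ceil_eq_sub_saw, ← sawDiv]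
    simp only [fract_intCast_div_eq_zero_iff hb, (isCoprime_of_dvd_mul_add_one hhω).dvd_mul_left_iff]
    push_cast
    split_ifs <;> ring
  simp only [hceil, sum_add_distrib, sum_sub_distrib, ← sum_mul, ← sum_div, sum_range_cast_id,
    sum_range_sawDiv_mul hb hhω, sum_range_ite_dvd hb, sum_const, card_range, nsmul_eq_mul]
  ring

lemma sawDiv_mul_eq_of_dvd_add (hb : 0 < b) (hcop : IsCoprime b ω) {a : ℤ} (ha : 0 ≤ a)
    (hab : a < b) {n : ℤ} (hna : b ∣ ω * n + a) :
    sawDiv (ω * n) b = 1 / 2 - a / b - if b ∣ n then 1 / 2 else 0 := by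
  have hmod : ω * n ≡ -a [ZMOD b] := by
    simpa using (Int.modEq_zero_iff_dvd.mpr hna).add_right (-a)
  have hdvd : b ∣ a ↔ b ∣ n := by
    rw [← hcop.dvd_mul_left_iff n]
    exact ⟨fun h => (dvd_add_left h).mp hna, fun h => (dvd_add_right h).mp hna⟩
  rw [sawDiv_congr hb hmod, sawDiv_neg, sawDiv_eq_emod hb, Int.emod_eq_of_lt ha hab]
  simp only [hdvd]
  split_ifs <;> ring

lemma dvd_mul_add_of_dvd_sub (hhω : b ∣ h * ω + 1) {a n : ℤ} (hn : b ∣ n - a * h) :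
    b ∣ ω * n + a := by
  have := (hn.mul_left ω).add (hhω.mul_left a)
  rwa [show ω * (n - a * h) + a * (h * ω + 1) = ω * n + a by ring] at this

lemma sum_range_ceil_mul_div_eq (hb : 0 < b) (hhω : b ∣ h * ω + 1) {a : ℤ} (ha : 0 ≤ a)
    (hab : a < b) {m : ℕ} (hma : b ∣ ω * m + a) :
    ∑ j ∈ range m, ((⌈(j : ℚ) * ω / b⌉ : ℤ) : ℝ) =
      m * (m - 1) / 2 * (ω / b)
        - ((1 / 2) * ⌊((m : ℝ) - 1) / b⌋ - dsum h b ((m : ℝ) / b) 0 + dsum h b 0 0)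
        + (m / 2 - 1 / 4) - a / b / 2 - 1 / 4 * (if b ∣ (m : ℤ) then 1 else 0) := by
  rw [sum_range_ceil_mul_div hb hhω,
    sawDiv_mul_eq_of_dvd_add hb (isCoprime_of_dvd_mul_add_one hhω) ha hab hma]
  split_ifs <;> ring

end CeilSum

section ProductOfOrders

variable {ι : Type*} [Fintype ι] (α : ι → ℤ)

lemma dvd_prod_div_of_ne [DecidableEq ι] {k l : ι} (hkl : k ≠ l) : α k ∣ (∏ j, α j) / α l := by
  rcases eq_or_ne (α l) 0 with h | h
  · simp [h]
  · rw [← mul_prod_erase univ α (mem_univ l), Int.mul_ediv_cancel_left _ h]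
    exact dvd_prod_of_mem α (mem_erase.mpr ⟨hkl, mem_univ k⟩)

variable {α}

lemma dvd_sub_mul_prod_div_of_eq [DecidableEq ι] {x y : ℤ} {c : ι → ℤ}
    (h : x * ∏ j, α j + ∑ k, c k * ((∏ j, α j) / α k) = y) (l : ι) :
    α l ∣ y - c l * ((∏ j, α j) / α l) := by
  rw [← h, ← add_sum_erase _ _ (mem_univ l), add_sub_assoc, add_sub_cancel_left]
  exact ((dvd_prod_of_mem α (mem_univ l)).mul_left x).add
    (dvd_sum fun k hk => (dvd_prod_div_of_ne α (ne_of_mem_erase hk).symm).mul_left _)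

lemma add_sum_div_eq_of_eq (hα : ∀ l, α l ≠ 0) {x y : ℤ} {c : ι → ℤ}
    (h : x * ∏ j, α j + ∑ k, c k * ((∏ j, α j) / α k) = y) :
    (x : ℝ) + ∑ k, (c k : ℝ) / α k = y / ((∏ j, α j : ℤ) : ℝ) := by
  have hα' : ∀ l, (α l : ℝ) ≠ 0 := fun l => by exact_mod_cast hα l
  have hP : ((∏ j, α j : ℤ) : ℝ) ≠ 0 := by exact_mod_cast prod_ne_zero_iff.mpr fun l _ => hα l
  rw [eq_div_iff hP, ← h, add_mul, sum_mul]
  push_cast [Int.cast_div (dvd_prod_of_mem α (mem_univ _)) (hα' _)]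
  congr 1
  exact sum_congr rfl fun k _ => by field_simp [hα' k]

end ProductOfOrders

theorem tau_compact_formula_general (ν : ℕ) (α ω : Fin ν → ℤ)
    (e₀ : ℤ)
    (hhs : e₀ * (∏ l, α l) + ∑ l, ω l * ((∏ k, α k) / α l) = -1)
    (Δ : ℕ → ℤ)
    (hΔ : ∀ j : ℕ, Δ j = 1 - (j : ℤ) * e₀ - ∑ l, ⌈((j : ℚ) * (ω l : ℚ)) / (α l : ℚ)⌉)
    (τ : ℕ → ℤ) (hτ : ∀ m : ℕ, τ m = ∑ j ∈ Finset.range m, Δ j)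
    (m : ℕ) (d : ℤ) (a : Fin ν → ℤ) (ha : ∀ l, 0 ≤ a l ∧ a l < α l)
    (hm : (m : ℤ) = d * (∏ l, α l) + ∑ l, a l * ((∏ k, α k) / α l)) :
    (τ m : ℝ) =
      (∑ l, ((1/2) * ((⌊((m : ℝ) - 1) / (α l : ℝ)⌋ : ℤ) : ℝ)
          - dsum ((∏ k, α k) / α l) (α l) ((m : ℝ) / (α l : ℝ)) 0
          + dsum ((∏ k, α k) / α l) (α l) 0 0))
        + (m : ℝ) ^ 2 / (2 * ((∏ l, α l : ℤ) : ℝ))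
        + (m : ℝ) * (1 - (ν : ℝ) / 2) - (d : ℝ) / 2 + (ν : ℝ) / 4
        + (1/4) * ∑ l, (if α l ∣ (m : ℤ) then (1 : ℝ) else 0) := by
  have hα : ∀ l, 0 < α l := fun l => (ha l).1.trans_lt (ha l).2
  have hunit : ∀ l, α l ∣ (∏ k, α k) / α l * ω l + 1 := fun l => by
    simpa [mul_comm] using (dvd_sub_mul_prod_div_of_eq hhs l).neg_right
  have hres : ∀ l, α l ∣ ω l * m + a l := fun l =>
    dvd_mul_add_of_dvd_sub (hunit l) (dvd_sub_mul_prod_div_of_eq hm.symm l)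
  have hE := add_sum_div_eq_of_eq (fun l => (hα l).ne') hhs
  have hd := add_sum_div_eq_of_eq (fun l => (hα l).ne') hm.symm
  have hτm : (τ m : ℝ) = m - e₀ * (m * (m - 1) / 2)
      - ∑ l, ∑ j ∈ range m, ((⌈(j : ℚ) * ω l / α l⌉ : ℤ) : ℝ) := by
    simp only [hτ, hΔ, Int.cast_sum, Int.cast_sub, Int.cast_one, Int.cast_mul, Int.cast_natCast,
      sum_sub_distrib, sum_const, card_range, nsmul_eq_mul, ← sum_mul, sum_range_cast_id]
    rw [sum_comm]
    ring
  rw [hτm, sum_congr rfl fun l _ =>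
    sum_range_ceil_mul_div_eq (hα l) (hunit l) (ha l).1 (ha l).2 (hres l)]
  simp only [sum_add_distrib, sum_sub_distrib, ← mul_sum, ← sum_div, sum_const, card_univ,
    Fintype.card_fin, nsmul_eq_mul]
  linear_combination (-(m * (m - 1) / 2 : ℝ)) * hE + 1 / 2 * hd

/-- a compact formula for `τ(m)` for Seifert integral homology spheres.
Here `α = ∏ α_l`, `α̂_l = α / α_l`, the homology sphere condition reads
`e₀α + Σ ω_l α̂_l = −1`, `Δ_j = 1 − j e₀ − Σ ⌈j ω_l / α_l⌉`, `τ(m) = Σ_{j<m} Δ_j`,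
and if `m = d α + Σ a_l α̂_l` with `0 ≤ a_l < α_l`, then
`τ(m) = Σ_l ( ⌊(m−1)/α_l⌋/2 − s(α̂_l, α_l; m/α_l, 0) + s(α̂_l, α_l) )
  + m²/(2α) + m(1 − ν/2) − d/2 + ν/4 + (1/4)·Σ_l ε_{α_l}(m)`. -/
theorem tau_compact_formula (ν : ℕ) (hν : 1 ≤ ν) (α ω : Fin ν → ℤ)
    (hω : ∀ l, 0 < ω l) (hωα : ∀ l, ω l < α l) (hcop : ∀ l, IsCoprime (α l) (ω l))
    (e₀ : ℤ)
    (hhs : e₀ * (∏ l, α l) + ∑ l, ω l * ((∏ k, α k) / α l) = -1)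
    (Δ : ℕ → ℤ)
    (hΔ : ∀ j : ℕ, Δ j = 1 - (j : ℤ) * e₀ - ∑ l, ⌈((j : ℚ) * (ω l : ℚ)) / (α l : ℚ)⌉)
    (τ : ℕ → ℤ) (hτ : ∀ m : ℕ, τ m = ∑ j ∈ Finset.range m, Δ j)
    (m : ℕ) (d : ℤ) (a : Fin ν → ℤ) (ha : ∀ l, 0 ≤ a l ∧ a l < α l)
    (hm : (m : ℤ) = d * (∏ l, α l) + ∑ l, a l * ((∏ k, α k) / α l)) :
    (τ m : ℝ) =
      (∑ l, ((1/2) * ((⌊((m : ℝ) - 1) / (α l : ℝ)⌋ : ℤ) : ℝ)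
          - dsum ((∏ k, α k) / α l) (α l) ((m : ℝ) / (α l : ℝ)) 0
          + dsum ((∏ k, α k) / α l) (α l) 0 0))
        + (m : ℝ) ^ 2 / (2 * ((∏ l, α l : ℤ) : ℝ))
        + (m : ℝ) * (1 - (ν : ℝ) / 2) - (d : ℝ) / 2 + (ν : ℝ) / 4
        + (1/4) * ∑ l, (if α l ∣ (m : ℤ) then (1 : ℝ) else 0) :=
  tau_compact_formula_general ν α ω e₀ hhs Δ hΔ τ hτ m d a ha hm
end

section
/- For every integer n with 0 ≤ n ≤ 2δ−3 one has τ(M_n) = n(n−2δ+3)/2 + 1, where M_n = npq + 1. -/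
/-!
All three ceilings in `Δ_j` are quasi-periodic: `⌈(j + b)a/b⌉ = ⌈ja/b⌉ + a`, and for `a` coprime
to `b` pairing `j` with `b - j` gives `2 ∑_{j<b} ⌈ja/b⌉ = (b - 1)(a + 1)`; the third one equals
`j - ⌊j/(pq - 1)⌋`. Summing over `j < npq + 1 = n(pq - 1) + (n + 1)` (the bound `n ≤ 2δ - 3` keeps
the incomplete last period of `⌊j/(pq - 1)⌋` of length `n + 1 ≤ pq - 1`) turns `2τ(npq + 1)` into a
polynomial in `n, p, q, p', q'`, which collapses to `n(n - 2δ + 3) + 2` by `p'q + pq' = pq + 1`.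
That identity holds since `p'q + pq' ≡ 1 (mod pq)` by the Chinese remainder theorem and
`q ≤ p'q + pq' < 2pq`.
-/

/-- `Δ_j = 1 + 2j − ⌈jp'/p⌉ − ⌈jq'/q⌉ − ⌈j(pq−2)/(pq−1)⌉`, the increment of the τ-function of
the negative definite Seifert manifold `Σ(−2,(p,p'),(q,q'),(pq−1,pq−2)) = −S³₁(T_{p,q})`. -/
def torusDelta (p q p' q' : ℕ) (j : ℕ) : ℤ :=
  1 + 2 * (j : ℤ) - ⌈((j : ℚ) * (p' : ℚ)) / (p : ℚ)⌉ - ⌈((j : ℚ) * (q' : ℚ)) / (q : ℚ)⌉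
    - ⌈((j : ℚ) * ((p : ℚ) * (q : ℚ) - 2)) / ((p : ℚ) * (q : ℚ) - 1)⌉

/-- `τ(m) = Σ_{j=0}^{m−1} Δ_j`. -/
def torusTau (p q p' q' : ℕ) (m : ℕ) : ℤ := ∑ j ∈ Finset.range m, torusDelta p q p' q' j

open Finset

section QuasiPeriodic

variable {f : ℕ → ℤ} {b : ℕ} {c : ℤ}

lemma map_mul_add_of_map_add (hf : ∀ j, f (j + b) = f j + c) (N j : ℕ) :
    f (N * b + j) = f j + N * c := by
  induction N with
  | zero => simp
  | succ N ih =>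
    rw [add_mul, one_mul, add_right_comm, hf, ih]
    push_cast
    ring

lemma two_mul_sum_range_mul_of_map_add (hf : ∀ j, f (j + b) = f j + c) (N : ℕ) :
    2 * ∑ j ∈ range (N * b), f j = 2 * N * ∑ j ∈ range b, f j + b * c * N * (N - 1) := by
  induction N with
  | zero => simp
  | succ N ih =>
    rw [add_mul, one_mul, sum_range_add, mul_add, ih]
    simp only [map_mul_add_of_map_add hf, sum_add_distrib, sum_const, card_range, nsmul_eq_mul]
    push_cast
    ring

end QuasiPeriodic

lemma two_mul_sum_range_ediv {r s : ℕ} (hs : s ≤ r) (N : ℕ) :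
    2 * ∑ j ∈ range (N * r + s), (j : ℤ) / r = r * N * (N - 1) + 2 * N * s := by
  rcases Nat.eq_zero_or_pos r with rfl | hr
  · simp [Nat.le_zero.1 hs]
  have hf : ∀ j : ℕ, ((j + r : ℕ) : ℤ) / r = (j : ℤ) / r + 1 := fun j => by
    push_cast
    simpa using Int.add_mul_ediv_right (j : ℤ) 1 (c := r) (by omega)
  have hsmall : ∀ t ≤ r, ∑ j ∈ range t, (j : ℤ) / r = 0 := fun t ht =>
    sum_eq_zero fun j hj =>
      Int.ediv_eq_zero_of_lt (by positivity) (by have := mem_range.1 hj; omega)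
  rw [sum_range_add, mul_add, two_mul_sum_range_mul_of_map_add (f := fun j : ℕ => (j : ℤ) / r) hf]
  simp only [map_mul_add_of_map_add (f := fun j : ℕ => (j : ℤ) / r) hf, sum_add_distrib,
    hsmall r le_rfl, hsmall s hs, sum_const, card_range, nsmul_eq_mul]
  ring

section Ceil

variable {K : Type*} [Field K] [LinearOrder K] [IsStrictOrderedRing K] [FloorRing K]

lemma ceil_natCast_add_mul_div (a : ℕ) {b : ℕ} (hb : b ≠ 0) (j : ℕ) :
    ⌈(((j + b : ℕ) : K) * a) / b⌉ = ⌈((j : K) * a) / b⌉ + a := by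
  have : (((j + b : ℕ) : K) * a) / b = (j * a) / b + ((a : ℤ) : K) := by
    push_cast
    field_simp
  rw [this, Int.ceil_add_intCast]

lemma ceil_mul_div_add_ceil_sub_mul_div {a b k : ℕ} (hab : a.Coprime b) (hk : 0 < k)
    (hkb : k < b) : ⌈((k : K) * a) / b⌉ + ⌈(((b - k : ℕ) : K) * a) / b⌉ = a + 1 := by
  have hb : (b : K) ≠ 0 := Nat.cast_ne_zero.2 (by omega)
  have hx : (((b - k : ℕ) : K) * a) / b = -(((k : K) * a) / b) + ((a : ℤ) : K) := by
    rw [Nat.cast_sub hkb.le]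
    push_cast
    field_simp
    ring
  have hxint : ((k : K) * a) / b ∉ Set.range (Int.cast : ℤ → K) := by
    rintro ⟨z, hz⟩
    rw [eq_div_iff hb] at hz
    have hdvdZ : (b : ℤ) ∣ (k * a : ℕ) := ⟨z, by rw [mul_comm (b : ℤ)]; exact_mod_cast hz.symm⟩
    have hbk : b ∣ k := hab.symm.dvd_of_dvd_mul_right (Int.natCast_dvd_natCast.1 hdvdZ)
    exact absurd (Nat.le_of_dvd hk hbk) (not_le.2 hkb)
  rw [hx, Int.ceil_add_intCast, Int.ceil_neg, (Int.ceil_eq_floor_add_one_iff_notMem _).2 hxint]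
  ring

lemma two_mul_sum_range_ceil_mul_div {a b : ℕ} (hab : a.Coprime b) (hb : 0 < b) :
    2 * ∑ j ∈ range b, ⌈((j : K) * a) / b⌉ = (b - 1) * (a + 1) := by
  obtain ⟨m, rfl⟩ : ∃ m, b = m + 1 := ⟨b - 1, by omega⟩
  set f : ℕ → ℤ := fun j => ⌈((j : K) * a) / (m + 1 : ℕ)⌉
  have hshift : ∑ j ∈ range (m + 1), f j = ∑ j ∈ range m, f (j + 1) := by
    simp [sum_range_succ', f]
  have hreflect : ∑ j ∈ range m, f (j + 1) = ∑ j ∈ range m, f (m - j) := by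
    rw [← sum_range_reflect]
    exact sum_congr rfl fun j hj => by congr 1; have := mem_range.1 hj; omega
  have hpair : ∀ j ∈ range m, f (j + 1) + f (m - j) = a + 1 := fun j hj => by
    have hj := mem_range.1 hj
    rw [show m - j = m + 1 - (j + 1) by omega]
    exact ceil_mul_div_add_ceil_sub_mul_div hab j.succ_pos (by omega)
  calc 2 * ∑ j ∈ range (m + 1), f j = ∑ j ∈ range m, (f (j + 1) + f (m - j)) := by
        rw [sum_add_distrib, ← hreflect, hshift, two_mul]
    _ = ((m + 1 : ℕ) - 1 : ℤ) * (a + 1) := by rw [sum_congr rfl hpair]; simp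

lemma two_mul_sum_range_mul_add_one_ceil_mul_div {a b : ℕ} (hab : a.Coprime b) (hb : 0 < b)
    (N : ℕ) :
    2 * ∑ j ∈ range (N * b + 1), ⌈((j : K) * a) / b⌉
      = N * ((b - 1) * (a + 1)) + a * b * N * (N - 1) + 2 * N * a := by
  have hf : ∀ j, ⌈(((j + b : ℕ) : K) * a) / b⌉ = ⌈((j : K) * a) / b⌉ + a :=
    ceil_natCast_add_mul_div a hb.ne'
  have hlast := map_mul_add_of_map_add (f := fun j : ℕ => ⌈((j : K) * a) / b⌉) hf N 0
  rw [sum_range_succ, mul_add,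
    two_mul_sum_range_mul_of_map_add (f := fun j : ℕ => ⌈((j : K) * a) / b⌉) hf,
    ← add_zero (N * b), hlast]
  simp only [Nat.cast_zero, zero_mul, zero_div, Int.ceil_zero, zero_add]
  linear_combination (N : ℤ) * two_mul_sum_range_ceil_mul_div (K := K) hab hb

lemma ceil_mul_sub_one_div (j : ℕ) {r : ℕ} (hr : r ≠ 0) :
    ⌈((j : K) * (r - 1)) / r⌉ = j - (j : ℤ) / r := by
  have : ((j : K) * (r - 1)) / r = -((j : K) / r) + ((j : ℤ) : K) := by
    push_cast
    field_simp
    ring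
  rw [this, Int.ceil_add_intCast, Int.ceil_neg, Int.floor_div_natCast, Int.floor_natCast]
  ring

end Ceil

lemma two_le_of_three_le_sub_one_mul_sub_one {p q : ℕ} (h : 3 ≤ (p - 1) * (q - 1)) :
    2 ≤ p ∧ 2 ≤ q := by
  constructor <;> by_contra! hlt
  · simp [Nat.sub_eq_zero_of_le (Nat.le_of_lt_succ hlt)] at h
  · simp [Nat.sub_eq_zero_of_le (Nat.le_of_lt_succ hlt)] at h

lemma mul_add_mul_eq_mul_add_one_of_modEq {p q p' q' : ℕ} (hp : 2 ≤ p) (hq : 2 ≤ q)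
    (hp'lt : p' < p) (hp' : p' * q ≡ 1 [MOD p]) (hq'lt : q' < q) (hq' : p * q' ≡ 1 [MOD q]) :
    p' * q + p * q' = p * q + 1 := by
  have hcop : p.Coprime q := Nat.coprime_of_mul_modEq_one q' hq'
  have hmodp : p' * q + p * q' ≡ 1 [MOD p] := by
    simpa using hp'.add (Nat.modEq_zero_iff_dvd.2 (dvd_mul_right p q'))
  have hmodq : p' * q + p * q' ≡ 1 [MOD q] := by
    simpa using (Nat.modEq_zero_iff_dvd.2 (dvd_mul_left q p')).add hq'
  have hmod := (Nat.modEq_and_modEq_iff_modEq_mul hcop).1 ⟨hmodp, hmodq⟩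
  have hp'pos : 0 < p' := Nat.pos_of_ne_zero fun h => by
    simp [h, Nat.ModEq, Nat.one_mod_eq_one.2 (by omega : p ≠ 1)] at hp'
  have hlower : q ≤ p' * q := Nat.le_mul_of_pos_left q hp'pos
  have hupper : p' * q + p * q' < 2 * (p * q) := by nlinarith
  have hdiv := Nat.div_add_mod (p' * q + p * q') (p * q)
  rw [hmod, Nat.one_mod_eq_one.2 (by nlinarith)] at hdiv
  obtain ⟨k, hk⟩ : ∃ k, p * q * k + 1 = p' * q + p * q' := ⟨_, hdiv⟩
  have hk1 : k = 1 := by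
    rcases k with _ | _ | k
    · omega
    · rfl
    · nlinarith [Nat.zero_le (p * q * k)]
  rw [← hk, hk1, mul_one]

lemma torusDelta_eq (p' q' : ℕ) {p q : ℕ} (hpq : 2 ≤ p * q) (j : ℕ) :
    torusDelta p q p' q' j = 1 + j - ⌈((j : ℚ) * p') / p⌉ - ⌈((j : ℚ) * q') / q⌉
      + (j : ℤ) / (p * q - 1 : ℕ) := by
  have hr : ((p * q - 1 : ℕ) : ℚ) = p * q - 1 := by
    rw [Nat.cast_sub (by omega), Nat.cast_mul, Nat.cast_one]
  rw [torusDelta, show (p : ℚ) * q - 2 = ((p * q - 1 : ℕ) : ℚ) - 1 by rw [hr]; ring, ← hr,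
    ceil_mul_sub_one_div j (by omega)]
  ring

lemma two_mul_sum_range_one_add (M : ℕ) :
    2 * ∑ j ∈ range M, (1 + (j : ℤ)) = M * (M + 1) := by
  have hgauss := congrArg (Nat.cast : ℕ → ℤ) (sum_range_id_mul_two M)
  rcases M with _ | M
  · simp
  push_cast at hgauss
  rw [sum_add_distrib]
  simp only [sum_const, card_range, nsmul_eq_mul, mul_one] at hgauss ⊢
  push_cast
  linear_combination hgauss

lemma two_mul_torusTau_mul_mul_add_one {p q p' q' : ℕ} (hp'cop : p'.Coprime p)
    (hq'cop : q'.Coprime q) {n : ℕ} (hn : n + 2 ≤ p * q) :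
    2 * torusTau p q p' q' (n * p * q + 1)
      = (n * p * q + 1) * (n * p * q + 2)
        - (n * q * ((p - 1) * (p' + 1)) + p' * p * (n * q) * (n * q - 1) + 2 * (n * q) * p')
        - (n * p * ((q - 1) * (q' + 1)) + q' * q * (n * p) * (n * p - 1) + 2 * (n * p) * q')
        + ((p * q - 1) * n * (n - 1) + 2 * n * (n + 1)) := by
  have hp : 0 < p := Nat.pos_of_ne_zero (by rintro rfl; simp at hn)
  have hq : 0 < q := Nat.pos_of_ne_zero (by rintro rfl; simp at hn)
  have hA := two_mul_sum_range_mul_add_one_ceil_mul_div (K := ℚ) hp'cop hp (n * q)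
  have hB := two_mul_sum_range_mul_add_one_ceil_mul_div (K := ℚ) hq'cop hq (n * p)
  have hD := two_mul_sum_range_ediv (show n + 1 ≤ p * q - 1 by omega) n
  have hM : n * (p * q - 1) + (n + 1) = n * p * q + 1 := by
    zify [show 1 ≤ p * q by omega]
    ring
  rw [show n * q * p + 1 = n * p * q + 1 by ring] at hA
  rw [hM] at hD
  have hr : ((p * q - 1 : ℕ) : ℤ) = p * q - 1 := by rw [Nat.cast_pred (by omega), Nat.cast_mul]
  rw [torusTau, sum_congr rfl fun j _ => torusDelta_eq p' q' (by omega) j, sum_add_distrib,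
    sum_sub_distrib, sum_sub_distrib]
  have hS := two_mul_sum_range_one_add (n * p * q + 1)
  push_cast at hS hA hB
  rw [Nat.cast_add_one] at hD
  linear_combination hS - hA - hB + hD + n * (n - 1) * hr

theorem torusTau_at_max_general (p q : ℕ)
    (δ : ℕ) (hδ : 2 * δ = (p - 1) * (q - 1))
    (p' : ℕ) (hp'lt : p' < p) (hp' : p' * q ≡ 1 [MOD p])
    (q' : ℕ) (hq'lt : q' < q) (hq' : p * q' ≡ 1 [MOD q])
    (n : ℕ) (hn : (n : ℤ) ≤ 2 * (δ : ℤ) - 3) :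
    (torusTau p q p' q' (n * p * q + 1) : ℚ)
      = (n : ℚ) * ((n : ℚ) - 2 * (δ : ℚ) + 3) / 2 + 1 := by
  obtain ⟨hp, hq⟩ := two_le_of_three_le_sub_one_mul_sub_one (hδ ▸ (by omega : 3 ≤ 2 * δ))
  have hδZ : 2 * (δ : ℤ) = (p - 1) * (q - 1) := by
    rw [← Nat.cast_pred (by omega), ← Nat.cast_pred (by omega)]
    exact_mod_cast hδ
  have hkey : (p' * q + p * q' : ℤ) = p * q + 1 := by
    exact_mod_cast mul_add_mul_eq_mul_add_one_of_modEq hp hq hp'lt hp' hq'lt hq'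
  have hτ := two_mul_torusTau_mul_mul_add_one (Nat.coprime_of_mul_modEq_one q hp')
    (Nat.coprime_of_mul_modEq_one p (by rwa [mul_comm])) (show n + 2 ≤ p * q by zify; nlinarith)
  have hτZ : 2 * torusTau p q p' q' (n * p * q + 1) = n * (n - 2 * δ + 3) + 2 := by
    rw [hτ]
    linear_combination (-(n * (n * p * q + 1) : ℤ)) * hkey + n * hδZ
  have hτQ := congrArg (Int.cast : ℤ → ℚ) hτZ
  push_cast at hτQ
  linear_combination hτQ / 2

/-- for `0 ≤ n ≤ 2δ−3` one has `τ(M_n) = n(n−2δ+3)/2 + 1`, with `M_n = npq+1`. -/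
theorem torusTau_at_max (p q : ℕ) (hp : 2 ≤ p) (hpq : p < q) (hcop : Nat.Coprime p q)
    (δ : ℕ) (hδ : 2 * δ = (p - 1) * (q - 1))
    (p' : ℕ) (hp'pos : 0 < p') (hp'lt : p' < p) (hp' : p' * q ≡ 1 [MOD p])
    (q' : ℕ) (hq'pos : 0 < q') (hq'lt : q' < q) (hq' : p * q' ≡ 1 [MOD q])
    (n : ℕ) (hn : (n : ℤ) ≤ 2 * (δ : ℤ) - 3) :
    (torusTau p q p' q' (n * p * q + 1) : ℚ)
      = (n : ℚ) * ((n : ℚ) - 2 * (δ : ℚ) + 3) / 2 + 1 :=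
  torusTau_at_max_general p q δ hδ p' hp'lt hp' q' hq'lt hq' n hn
end

section
/- Set e = −2 + p'/p + q'/q + (pq−2)/(pq−1) and ε = (−1 + 1/p + 1/q + 1/(pq−1))/e. Then ε²·e + e + 5 − 12·( s(p', p) + s(q', q) + s(pq−2, pq−1) ) = −4δ(δ−3). (This computes the invariant K² + s of the negative definite Seifert manifold Σ(−2,(p,p'),(q,q'),(pq−1,pq−2)) = −S³₁(T_{p,q}).) -/
/-! For coprime `a, b` the map `k ↦ a k mod b` permutes `range b`, which turns the Dedekind sum
into `s(a, b) = b⁻² ∑_{k<b} k (a k mod b) - (b - 1)/4`. In this form `s(a, b)` visibly depends on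
`a` only up to inversion mod `b`, `s(b - 1, b)` is the explicit sum `∑ k (b - k)`, and reciprocity
`s(a, b) + s(b, a) = -1/4 + (a/b + b/a + 1/(ab))/12` follows by counting the lattice points of the
rectangle `[0, b) × [0, a)` on either side of its diagonal. By the Chinese remainder theorem
`p'q + pq' = pq + 1`, so `e = -1/(pq(pq - 1))` and `s(p', p) + s(q', q) = s(q, p) + s(p, q)`; the
claim becomes a rational identity in `p` and `q`. -/

open Finset

lemma saw_natCast_div (m : ℕ) {b : ℕ} (hb : 0 < b) :
    saw (m / b) = if b ∣ m then 0 else ((m % b : ℕ) : ℝ) / b - 1 / 2 := by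
  have hfract : Int.fract ((m : ℝ) / b) = ((m % b : ℕ) : ℝ) / b :=
    Int.fract_div_natCast_eq_div_natCast_mod
  simp [saw, hfract, hb.ne', Nat.dvd_iff_mod_eq_zero]

lemma sum_range_comp_mul_mod {M : Type*} [AddCommMonoid M] {c b : ℕ} (h : c.Coprime b)
    (f : ℕ → M) : ∑ k ∈ range b, f (c * k % b) = ∑ k ∈ range b, f k := by
  rcases Nat.eq_zero_or_pos b with rfl | hb
  · simp
  have hmaps : Set.MapsTo (fun k => c * k % b) (range b : Set ℕ) (range b) :=
    fun k _ => mem_range.2 (Nat.mod_lt _ hb)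
  have hinj : Set.InjOn (fun k => c * k % b) (range b : Set ℕ) := fun k hk l hl hkl =>
    (Nat.ModEq.cancel_left_of_coprime (Nat.coprime_comm.1 h) hkl).eq_of_lt_of_lt
      (mem_range.1 hk) (mem_range.1 hl)
  have hbij := ((range b).finite_toSet.injOn_iff_bijOn_of_mapsTo hmaps).1 hinj
  exact sum_nbij _ (fun k hk => hbij.mapsTo hk) hbij.injOn hbij.surjOn fun _ _ => rfl

lemma two_mul_sum_range_natCast {R : Type*} [CommRing R] (n : ℕ) :
    2 * ∑ k ∈ range n, (k : R) = n * (n - 1) := by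
  induction n with
  | zero => simp
  | succ n ih => rw [sum_range_succ, mul_add, ih]; push_cast; ring

lemma six_mul_sum_range_natCast_sq {R : Type*} [CommRing R] (n : ℕ) :
    6 * ∑ k ∈ range n, (k : R) ^ 2 = n * (n - 1) * (2 * n - 1) := by
  induction n with
  | zero => simp
  | succ n ih => rw [sum_range_succ, mul_add, ih]; push_cast; ring

def mulModSum (a b : ℕ) : ℕ := ∑ k ∈ range b, k * (a * k % b)

lemma not_dvd_mul_of_coprime {a b k : ℕ} (h : a.Coprime b) (hk : 0 < k) (hkb : k < b) :
    ¬ b ∣ a * k := fun hdvd =>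
  Nat.not_dvd_of_pos_of_lt hk hkb ((Nat.coprime_comm.1 h).dvd_of_dvd_mul_left hdvd)

lemma dsum_natCast_eq_mulModSum {a b : ℕ} (h : a.Coprime b) (hb : 0 < b) :
    dsum a b 0 0 = (mulModSum a b : ℝ) / b ^ 2 - ((b : ℝ) - 1) / 4 := by
  have hb' : (b : ℝ) ≠ 0 := by positivity
  have hterm : ∀ k ∈ range b, saw ((k : ℝ) / b) * saw (((a * k : ℕ) : ℝ) / b) =
      ((k * (a * k % b) : ℕ) : ℝ) / b ^ 2 - ((k : ℝ) + ((a * k % b : ℕ) : ℝ)) / (2 * b) + 1 / 4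
        - if k = 0 then 1 / 4 else 0 := by
    intro k hk
    rw [saw_natCast_div _ hb, saw_natCast_div _ hb]
    rcases Nat.eq_zero_or_pos k with rfl | hk0
    · simp
    have hkb := mem_range.1 hk
    rw [if_neg (Nat.not_dvd_of_pos_of_lt hk0 hkb), if_neg (not_dvd_mul_of_coprime h hk0 hkb),
      if_neg hk0.ne', Nat.mod_eq_of_lt hkb]
    field_simp
    push_cast
    ring
  have hsum : ∑ k ∈ range b, (k : ℝ) + ∑ k ∈ range b, ((a * k % b : ℕ) : ℝ) = b * (b - 1) := by
    rw [sum_range_comp_mul_mod h (fun m => (m : ℝ)), ← two_mul, two_mul_sum_range_natCast]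
  simp only [dsum, Int.toNat_natCast, Int.cast_natCast, add_zero]
  simp only [← Nat.cast_mul]
  rw [sum_congr rfl hterm]
  simp only [sum_sub_distrib, sum_add_distrib, ← sum_div, sum_ite_eq', mem_range, hb, if_true,
    sum_const, card_range, nsmul_eq_mul, mulModSum, Nat.cast_sum]
  rw [hsum]
  field_simp
  ring

lemma mulModSum_eq_of_mul_modEq_one {a c b : ℕ} (h : a * c ≡ 1 [MOD b]) :
    mulModSum c b = mulModSum a b := by
  have hc : c.Coprime b := Nat.coprime_of_mul_modEq_one a (by rwa [mul_comm])
  unfold mulModSum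
  conv_rhs => rw [← sum_range_comp_mul_mod hc]
  refine sum_congr rfl fun k hk => ?_
  have hinv : a * (c * k % b) % b = k := by
    calc a * (c * k % b) % b = a * c * k % b := by rw [Nat.mul_mod, Nat.mod_mod, ← Nat.mul_mod,
          mul_assoc]
      _ = 1 * k % b := (h.mul_right k)
      _ = k := by rw [one_mul, Nat.mod_eq_of_lt (mem_range.1 hk)]
  rw [hinv, mul_comm]

lemma dsum_eq_of_mul_modEq_one {a c b : ℕ} (hb : 0 < b) (h : a * c ≡ 1 [MOD b]) :
    dsum c b 0 0 = dsum a b 0 0 := by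
  rw [dsum_natCast_eq_mulModSum (Nat.coprime_of_mul_modEq_one a (by rwa [mul_comm])) hb,
    dsum_natCast_eq_mulModSum (Nat.coprime_of_mul_modEq_one c h) hb,
    mulModSum_eq_of_mul_modEq_one h]

lemma mulModSum_pred_self (b : ℕ) :
    6 * (mulModSum (b - 1) b : ℝ) = (b - 1) * b * (b + 1) := by
  have hterm : ∀ k ∈ range b, ((k * ((b - 1) * k % b) : ℕ) : ℝ) = b * k - k ^ 2 := by
    intro k hk
    have hkb := mem_range.1 hk
    rcases Nat.eq_zero_or_pos k with rfl | hk0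
    · simp
    have hmod : (b - 1) * k % b = b - k := by
      have : (b - 1) * k = b * (k - 1) + (b - k) := by
        zify [hk0, hkb.le, hkb.le.trans' hk0]
        ring
      rw [this, Nat.mul_add_mod, Nat.mod_eq_of_lt (by omega)]
    rw [hmod]
    push_cast [hkb.le]
    ring
  have h1 := two_mul_sum_range_natCast (R := ℝ) b
  have h2 := six_mul_sum_range_natCast_sq (R := ℝ) b
  rw [mulModSum, Nat.cast_sum, sum_congr rfl hterm, sum_sub_distrib, ← mul_sum]
  linear_combination 3 * (b : ℝ) * h1 - h2

lemma dsum_pred_self {b : ℤ} (hb : 0 < b) :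
    dsum (b - 1) b 0 0 = -(((b : ℝ) - 1) * ((b : ℝ) - 2)) / (12 * b) := by
  lift b to ℕ using hb.le
  have hb0 : 0 < b := by exact_mod_cast hb
  have hcop : (b - 1).Coprime b := by
    rcases b with _ | b
    · omega
    · simp
  rw [show (b : ℤ) - 1 = ((b - 1 : ℕ) : ℤ) by omega, dsum_natCast_eq_mulModSum hcop hb0]
  have hM : (mulModSum (b - 1) b : ℝ) = (b - 1) * b * (b + 1) / 6 := by
    linear_combination mulModSum_pred_self b / 6
  rw [hM, Int.cast_natCast]
  field_simp
  ring

lemma filter_range_mul_le_eq_range {a b y : ℕ} (ha : 0 < a) (hb : 0 < b) (hy : y < a) :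
    (range b).filter (fun x => a * x ≤ b * y) = range (b * y / a + 1) := by
  have hlt : b * y / a < b := (Nat.div_lt_iff_lt_mul ha).2 (Nat.mul_lt_mul_of_pos_left hy hb)
  ext x
  simp only [mem_filter, mem_range, Nat.lt_succ_iff, Nat.le_div_iff_mul_le ha, mul_comm x a]
  constructor
  · exact fun h => h.2
  · exact fun h => ⟨((Nat.le_div_iff_mul_le ha).2 (by rwa [mul_comm])).trans_lt hlt, h⟩

lemma filter_range_mul_lt_eq_range {a b x : ℕ} (h : a.Coprime b) (hx : 0 < x) (hxb : x < b) :
    (range a).filter (fun y => b * y < a * x) = range (a * x / b + 1) := by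
  have hb : 0 < b := hx.trans hxb
  have hne : ∀ y, b * y ≠ a * x := fun y hy => not_dvd_mul_of_coprime h hx hxb ⟨y, hy.symm⟩
  ext y
  simp only [mem_filter, mem_range, Nat.lt_succ_iff, Nat.le_div_iff_mul_le hb, mul_comm y b]
  constructor
  · exact fun h => h.2.le
  · intro hle
    have hlt : b * y < a * x := lt_of_le_of_ne hle (hne y)
    refine ⟨Nat.lt_of_mul_lt_mul_left (a := b) ?_, hlt⟩
    calc b * y < a * x := hlt
      _ ≤ a * b := Nat.mul_le_mul_left a hxb.le
      _ = b * a := mul_comm a b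

-- Both sides sum `x` over the lattice points of `[0, b) × [0, a)`, split by the sign of `ax - by`.
lemma sum_range_mul_div_add_sum_sum_range_div {a b : ℕ} (h : a.Coprime b) (ha : 0 < a)
    (hb : 0 < b) :
    ∑ x ∈ range b, x * (a * x / b + 1) + ∑ y ∈ range a, ∑ x ∈ range (b * y / a + 1), x =
      a * ∑ x ∈ range b, x := by
  have hsplit : ∀ x y : ℕ,
      x = (if b * y < a * x then x else 0) + (if a * x ≤ b * y then x else 0) :=
    fun x y => by split_ifs <;> omega
  have hbelow : ∀ x ∈ range b, ∑ y ∈ range a, (if b * y < a * x then x else 0) =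
      x * (a * x / b + 1) := by
    intro x hx
    rcases Nat.eq_zero_or_pos x with rfl | hx0
    · simp
    rw [← sum_filter, filter_range_mul_lt_eq_range h hx0 (mem_range.1 hx), sum_const, card_range,
      smul_eq_mul, mul_comm]
  have habove : ∀ y ∈ range a, ∑ x ∈ range b, (if a * x ≤ b * y then x else 0) =
      ∑ x ∈ range (b * y / a + 1), x := by
    intro y hy
    rw [← sum_filter, filter_range_mul_le_eq_range ha hb (mem_range.1 hy)]
  calc ∑ x ∈ range b, x * (a * x / b + 1) + ∑ y ∈ range a, ∑ x ∈ range (b * y / a + 1), x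
      = ∑ x ∈ range b, ∑ y ∈ range a, (if b * y < a * x then x else 0)
        + ∑ y ∈ range a, ∑ x ∈ range b, (if a * x ≤ b * y then x else 0) := by
        rw [sum_congr rfl hbelow, sum_congr rfl habove]
    _ = ∑ x ∈ range b, ∑ y ∈ range a, x := by
        rw [sum_comm (s := range a), ← sum_add_distrib]
        refine sum_congr rfl fun x _ => ?_
        rw [← sum_add_distrib]
        exact sum_congr rfl fun y _ => (hsplit x y).symm
    _ = a * ∑ x ∈ range b, x := by simp [mul_sum]

lemma natCast_mul_div_eq_sub_mod (m n : ℕ) :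
    (n : ℝ) * ((m / n : ℕ) : ℝ) = m - ((m % n : ℕ) : ℝ) := by
  rw [eq_sub_iff_add_eq]
  exact_mod_cast Nat.div_add_mod m n

lemma mulModSum_reciprocity {a b : ℕ} (h : a.Coprime b) (ha : 0 < a) (hb : 0 < b) :
    12 * ((a : ℝ) ^ 2 * mulModSum a b + (b : ℝ) ^ 2 * mulModSum b a) =
      3 * a ^ 2 * b ^ 2 * (a + b - 3) + a * b * (a ^ 2 + b ^ 2 + 1) := by
  have hlattice : 2 * ∑ x ∈ range b, (x : ℝ) * ((a * x / b : ℕ) : ℝ) + 2 * ∑ x ∈ range b, (x : ℝ)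
      + ∑ y ∈ range a, ((b * y / a : ℕ) : ℝ) * (((b * y / a : ℕ) : ℝ) + 1) =
        2 * a * ∑ x ∈ range b, (x : ℝ) := by
    have hL := congrArg (fun n : ℕ => 2 * (n : ℝ)) (sum_range_mul_div_add_sum_sum_range_div h ha hb)
    have hinner : 2 * ∑ y ∈ range a, ∑ x ∈ range (b * y / a + 1), (x : ℝ) =
        ∑ y ∈ range a, ((b * y / a : ℕ) : ℝ) * (((b * y / a : ℕ) : ℝ) + 1) := by
      rw [mul_sum]
      refine sum_congr rfl fun y _ => ?_
      rw [two_mul_sum_range_natCast]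
      push_cast
      ring
    simp only [Nat.cast_add, Nat.cast_mul, Nat.cast_sum, mul_add, sum_add_distrib,
      mul_one] at hL
    linear_combination hL - hinner
  have hquot_b : b * ∑ x ∈ range b, (x : ℝ) * ((a * x / b : ℕ) : ℝ) =
      a * ∑ x ∈ range b, (x : ℝ) ^ 2 - mulModSum a b := by
    rw [mulModSum, Nat.cast_sum, mul_sum, mul_sum, ← sum_sub_distrib]
    refine sum_congr rfl fun x _ => ?_
    have hx := natCast_mul_div_eq_sub_mod (a * x) b
    push_cast at hx ⊢
    linear_combination (x : ℝ) * hx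
  have hquot_a : a ^ 2 * ∑ y ∈ range a, ((b * y / a : ℕ) : ℝ) * (((b * y / a : ℕ) : ℝ) + 1) =
      b ^ 2 * ∑ y ∈ range a, (y : ℝ) ^ 2 - 2 * b * mulModSum b a
        + ∑ y ∈ range a, ((b * y % a : ℕ) : ℝ) ^ 2
        + a * b * ∑ y ∈ range a, (y : ℝ) - a * ∑ y ∈ range a, ((b * y % a : ℕ) : ℝ) := by
    simp only [mulModSum, Nat.cast_sum, Nat.cast_mul, mul_sum, ← sum_sub_distrib,
      ← sum_add_distrib]
    refine sum_congr rfl fun y _ => ?_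
    have hy := natCast_mul_div_eq_sub_mod (b * y) a
    push_cast at hy ⊢
    linear_combination (a * ((b * y / a : ℕ) : ℝ) + (b * y - ((b * y % a : ℕ) : ℝ)) + a) * hy
  have hperm := sum_range_comp_mul_mod (Nat.coprime_comm.1 h) (fun m => (m : ℝ))
  have hperm_sq := sum_range_comp_mul_mod (Nat.coprime_comm.1 h) (fun m => (m : ℝ) ^ 2)
  rw [hperm, hperm_sq] at hquot_a
  -- eliminate the floor sums between `hlattice`, `hquot_b` and `hquot_a`
  linear_combination 12 * (a : ℝ) ^ 2 * hquot_b + 6 * (b : ℝ) * hquot_a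
    - 6 * (a : ℝ) ^ 2 * b * hlattice
    + 2 * (a : ℝ) ^ 3 * six_mul_sum_range_natCast_sq (R := ℝ) b
    + ((b : ℝ) ^ 3 + b) * six_mul_sum_range_natCast_sq (R := ℝ) a
    + (3 * (a : ℝ) * b ^ 2 - 3 * a * b) * two_mul_sum_range_natCast (R := ℝ) a
    + (6 * (a : ℝ) ^ 2 * b - 6 * a ^ 3 * b) * two_mul_sum_range_natCast (R := ℝ) b

lemma dsum_add_dsum_swap {a b : ℕ} (h : a.Coprime b) (ha : 0 < a) (hb : 0 < b) :
    dsum a b 0 0 + dsum b a 0 0 = -1 / 4 + ((a : ℝ) / b + (b : ℝ) / a + 1 / (a * b)) / 12 := by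
  rw [dsum_natCast_eq_mulModSum h hb, dsum_natCast_eq_mulModSum (Nat.coprime_comm.1 h) ha]
  have hrec := mulModSum_reciprocity h ha hb
  field_simp
  linear_combination 4 * hrec

lemma mul_add_mul_eq_mul_add_one {p q p' q' : ℕ} (hcop : p.Coprime q)
    (hp'pos : 0 < p') (hp'lt : p' < p) (hq'pos : 0 < q') (hq'lt : q' < q)
    (hp' : p' * q ≡ 1 [MOD p]) (hq' : p * q' ≡ 1 [MOD q]) :
    p' * q + p * q' = p * q + 1 := by
  have hmod_p : p' * q + p * q' ≡ p * q + 1 [MOD p] := by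
    unfold Nat.ModEq
    rw [Nat.add_mul_mod_self_left, add_comm, Nat.add_mul_mod_self_left]
    exact hp'
  have hmod_q : p' * q + p * q' ≡ p * q + 1 [MOD q] := by
    unfold Nat.ModEq
    rw [add_comm, Nat.add_mul_mod_self_right, add_comm, Nat.add_mul_mod_self_right]
    exact hq'
  have hmod := (Nat.modEq_and_modEq_iff_modEq_mul hcop).1 ⟨hmod_p, hmod_q⟩
  refine hmod.eq_of_abs_lt ?_
  have hq_le : q ≤ p' * q := Nat.le_mul_of_pos_left q hp'pos
  have hp_le : p ≤ p * q' := Nat.le_mul_of_pos_right p hq'pos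
  have hp'q_le : p' * q + q ≤ p * q := by nlinarith
  have hpq'_le : p * q' + p ≤ p * q := by nlinarith
  rw [abs_sub_lt_iff]
  push_cast
  constructor <;> zify at * <;> linarith

theorem K_squared_plus_s_general (p q : ℕ) (hcop : Nat.Coprime p q)
    (δ : ℕ) (hδ : 2 * δ = (p - 1) * (q - 1))
    (p' : ℕ) (hp'pos : 0 < p') (hp'lt : p' < p) (hp' : p' * q ≡ 1 [MOD p])
    (q' : ℕ) (hq'pos : 0 < q') (hq'lt : q' < q) (hq' : p * q' ≡ 1 [MOD q])
    (e ε : ℝ)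
    (he : e = -2 + (p' : ℝ) / (p : ℝ) + (q' : ℝ) / (q : ℝ)
        + ((p : ℝ) * (q : ℝ) - 2) / ((p : ℝ) * (q : ℝ) - 1))
    (hε : ε = (-1 + 1 / (p : ℝ) + 1 / (q : ℝ) + 1 / ((p : ℝ) * (q : ℝ) - 1)) / e) :
    ε ^ 2 * e + e + 5
        - 12 * (dsum (p' : ℤ) (p : ℤ) 0 0 + dsum (q' : ℤ) (q : ℤ) 0 0
          + dsum ((p : ℤ) * (q : ℤ) - 2) ((p : ℤ) * (q : ℤ) - 1) 0 0) =
      -4 * (δ : ℝ) * ((δ : ℝ) - 3) := by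
  have hp : 2 ≤ p := by omega
  have hq : 2 ≤ q := by omega
  have hpq : (2 : ℝ) ≤ p * q := by norm_cast; nlinarith
  have hkey : (p' : ℝ) * q + p * q' = p * q + 1 := by
    exact_mod_cast mul_add_mul_eq_mul_add_one hcop hp'pos hp'lt hq'pos hq'lt hp' hq'
  have hs_p : dsum p' p 0 0 = dsum q p 0 0 :=
    dsum_eq_of_mul_modEq_one (by omega) (by rwa [mul_comm] at hp')
  have hs_q : dsum q' q 0 0 = dsum p q 0 0 := dsum_eq_of_mul_modEq_one (by omega) hq'
  have hs_pq : dsum ((p : ℤ) * q - 2) ((p : ℤ) * q - 1) 0 0 =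
      -(((p : ℝ) * q - 2) * ((p : ℝ) * q - 3)) / (12 * ((p : ℝ) * q - 1)) := by
    rw [show (p : ℤ) * q - 2 = (p : ℤ) * q - 1 - 1 by ring, dsum_pred_self (by nlinarith)]
    push_cast
    ring
  have hδ' : (δ : ℝ) = ((p : ℝ) - 1) * ((q : ℝ) - 1) / 2 := by
    have h := congrArg (Nat.cast : ℕ → ℝ) hδ
    push_cast [Nat.cast_sub (by omega : 1 ≤ p), Nat.cast_sub (by omega : 1 ≤ q)] at h
    linarith
  have hp0 : (p : ℝ) ≠ 0 := by positivity
  have hq0 : (q : ℝ) ≠ 0 := by positivity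
  have hpq1 : (p : ℝ) * q - 1 ≠ 0 := by linarith
  have he' : e = -1 / (p * q * (p * q - 1)) := by
    rw [he]
    field_simp
    linear_combination ((p : ℝ) * q - 1) * hkey
  rw [hs_p, hs_q, dsum_add_dsum_swap (Nat.coprime_comm.1 hcop) (by omega) (by omega), hs_pq, hε,
    he', hδ']
  field_simp
  ring

/-- with `e = −2 + p'/p + q'/q + (pq−2)/(pq−1)` and
`ε = (−1 + 1/p + 1/q + 1/(pq−1))/e`, one has
`ε²e + e + 5 − 12(s(p',p) + s(q',q) + s(pq−2,pq−1)) = −4δ(δ−3)`;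
this is `K² + s` for `Σ(−2,(p,p'),(q,q'),(pq−1,pq−2)) = −S³₁(T_{p,q})`. -/
theorem K_squared_plus_s (p q : ℕ) (hp : 2 ≤ p) (hpq : p < q) (hcop : Nat.Coprime p q)
    (δ : ℕ) (hδ : 2 * δ = (p - 1) * (q - 1))
    (p' : ℕ) (hp'pos : 0 < p') (hp'lt : p' < p) (hp' : p' * q ≡ 1 [MOD p])
    (q' : ℕ) (hq'pos : 0 < q') (hq'lt : q' < q) (hq' : p * q' ≡ 1 [MOD q])
    (e ε : ℝ)
    (he : e = -2 + (p' : ℝ) / (p : ℝ) + (q' : ℝ) / (q : ℝ)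
        + ((p : ℝ) * (q : ℝ) - 2) / ((p : ℝ) * (q : ℝ) - 1))
    (hε : ε = (-1 + 1 / (p : ℝ) + 1 / (q : ℝ) + 1 / ((p : ℝ) * (q : ℝ) - 1)) / e) :
    ε ^ 2 * e + e + 5
        - 12 * (dsum (p' : ℤ) (p : ℤ) 0 0 + dsum (q' : ℤ) (q : ℤ) 0 0
          + dsum ((p : ℤ) * (q : ℤ) - 2) ((p : ℤ) * (q : ℤ) - 1) 0 0) =
      -4 * (δ : ℝ) * ((δ : ℝ) - 3) :=
  K_squared_plus_s_general p q hcop δ hδ p' hp'pos hp'lt hp' q' hq'pos hq'lt hq' e ε he hε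
end
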